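/- Let n, r ≤ n and even k be positive integers, and let Δ⃗ = (Δ_1,…,Δ_n) be a nonincreasing sequence of nonnegative reals with Δ_n = 0 and Δ_{n−r+1} ≤ √(k/r) < 1. For each w ∈ {0,1}^{k/2}, define S_w = P_{w,1} × ⋯ × P_{w,n} by P_{w,i}(j) = 1/k for i ≤ n−r and P_{w,i}(j) = 1/k + (−1)^j · w_{⌈j/2⌉} · (Δ_{n−r+1} − Δ_i)/k for i > n−r. Let w, w′ ∈ {0,1}^{k/2} with Hamming distance h(w,w′) = 1, differing in the bit q with w_q = 1 and w′_q = 0. Then KL(S_w ‖ S_{w′}) ≤ 2, where KL is the Kullback–Leibler divergence between the product distributions on [k]^n. -/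

import Mathlib

open Finset

/-- Kullback–Leibler divergence between two pmfs on `Fin k`:
`KL(p‖q) = ∑_j p j · log (p j / q j)`. -/
noncomputable def klFin {k : ℕ} (p q : Fin k → ℝ) : ℝ :=
  ∑ j, p j * Real.log (p j / q j)

/-- The lower-bound construction: for `w ∈ {0,1}^{k/2}` (here `k = 2k'`), the `i`-th
distribution (1-based) of `S_w`. The element `j ∈ [k]` is represented by `j.val + 1`, so
`(−1)^j = (−1)^{j.val+1}` and `w_{⌈j/2⌉}` is `w ⟨j.val/2, _⟩`. -/
noncomputable def lbP (n r k' : ℕ) (Δ : ℕ → ℝ) (w : Fin k' → Bool) (i : ℕ)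
    (j : Fin (2 * k')) : ℝ :=
  if i ≤ n - r then 1 / (2 * (k' : ℝ))
  else 1 / (2 * (k' : ℝ)) +
    (if w ⟨j.1 / 2, by omega⟩ then
      (-1 : ℝ) ^ (j.1 + 1) * (Δ (n - r + 1) - Δ i) / (2 * (k' : ℝ))
    else 0)

/-!
The pmfs of `S_w` and `S_{w'}` coincide on coordinates `i ≤ n - r`. On a coordinate `i > n - r` they
differ only on the two outcomes governed by the bit `q`, where `P_{w,i}` has mass `(1 ∓ δ)/k`
against the uniform `1/k`, with `δ = Δ_{n-r+1} - Δ_i ∈ [0, √(k/r)]`. By `log x ≤ x - 1` such a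
coordinate contributes at most `2δ²/k ≤ 2/r`, and there are at most `r` of them.
-/

lemma klFin_eq_sum_of_eqOn {k : ℕ} {p q : Fin k → ℝ} (s : Finset (Fin k))
    (h : ∀ j ∉ s, p j = q j) : klFin p q = ∑ j ∈ s, p j * Real.log (p j / q j) := by
  refine (Finset.sum_subset (Finset.subset_univ s) fun j _ hj => ?_).symm
  rw [h j hj]
  rcases eq_or_ne (q j) 0 with h0 | h0 <;> simp [h0]

lemma klFin_self {k : ℕ} (p : Fin k → ℝ) : klFin p p = 0 := by
  simpa using klFin_eq_sum_of_eqOn (p := p) (q := p) ∅ fun _ _ => rfl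

lemma mul_log_one_sub_add_mul_log_one_add_le {δ : ℝ} (h₁ : -1 < δ) (h₂ : δ < 1) :
    (1 - δ) * Real.log (1 - δ) + (1 + δ) * Real.log (1 + δ) ≤ 2 * δ ^ 2 := by
  have hm := mul_le_mul_of_nonneg_left (Real.log_le_sub_one_of_pos (x := 1 - δ) (by linarith))
    (by linarith : (0 : ℝ) ≤ 1 - δ)
  have hp := mul_le_mul_of_nonneg_left (Real.log_le_sub_one_of_pos (x := 1 + δ) (by linarith))
    (by linarith : (0 : ℝ) ≤ 1 + δ)
  linarith

lemma antitoneOn_Icc_of_succ_le {β : Type*} [Preorder β] {f : ℕ → β} {n : ℕ}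
    (h : ∀ i ∈ Finset.Icc 1 (n - 1), f (i + 1) ≤ f i) : AntitoneOn f (Set.Icc 1 n) :=
  antitoneOn_of_succ_le Set.ordConnected_Icc fun a _ ha hsa => by
    simp only [Set.mem_Icc, Order.succ_eq_add_one] at ha hsa
    exact h a (Finset.mem_Icc.2 ⟨ha.1, by omega⟩)

section lbP

variable {n r k' : ℕ} {Δ : ℕ → ℝ} {i : ℕ}

lemma lbP_eq_of_le (w w' : Fin k' → Bool) (hi : i ≤ n - r) :
    lbP n r k' Δ w i = lbP n r k' Δ w' i := by
  funext j
  simp [lbP, hi]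

lemma lbP_apply_eq_of_bit_eq {w w' : Fin k' → Bool} {j : Fin (2 * k')}
    (h : w ⟨j / 2, by omega⟩ = w' ⟨j / 2, by omega⟩) :
    lbP n r k' Δ w i j = lbP n r k' Δ w' i j := by
  simp only [lbP, h]

lemma lbP_apply_of_bit_false {w : Fin k' → Bool} {q : Fin k'} {j : Fin (2 * k')}
    (hi : ¬ i ≤ n - r) (hj : j.1 / 2 = q.1) (hq : w q = false) :
    lbP n r k' Δ w i j = 1 / (2 * k') := by
  have : (⟨j / 2, by omega⟩ : Fin k') = q := Fin.ext hj
  simp [lbP, hi, this, hq]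

lemma lbP_apply_of_bit_true {w : Fin k' → Bool} {q : Fin k'} {j : Fin (2 * k')}
    (hi : ¬ i ≤ n - r) (hj : j.1 / 2 = q.1) (hq : w q = true) :
    lbP n r k' Δ w i j = (1 + (-1) ^ (j.1 + 1) * (Δ (n - r + 1) - Δ i)) / (2 * k') := by
  have : (⟨j / 2, by omega⟩ : Fin k') = q := Fin.ext hj
  simp only [lbP, hi, this, hq, if_false, if_true]
  ring

lemma klFin_lbP_eq_of_flip {w w' : Fin k' → Bool} {q : Fin k'} (hi : ¬ i ≤ n - r)
    (hq : w q = true) (hq' : w' q = false) (hsame : ∀ j : Fin k', j ≠ q → w j = w' j) :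
    klFin (lbP n r k' Δ w i) (lbP n r k' Δ w' i) =
      ((1 - (Δ (n - r + 1) - Δ i)) * Real.log (1 - (Δ (n - r + 1) - Δ i)) +
        (1 + (Δ (n - r + 1) - Δ i)) * Real.log (1 + (Δ (n - r + 1) - Δ i))) / (2 * k') := by
  have hk : (k' : ℝ) ≠ 0 := by have := q.pos; positivity
  let a : Fin (2 * k') := ⟨2 * q, by omega⟩
  let b : Fin (2 * k') := ⟨2 * q + 1, by omega⟩
  have ha : a.1 / 2 = q.1 := by simp only [a]; omega
  have hb : b.1 / 2 = q.1 := by simp only [b]; omega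
  have hab : a ≠ b := Fin.ne_of_val_ne (by simp only [a, b]; omega)
  have hrest : ∀ j ∉ ({a, b} : Finset _), lbP n r k' Δ w i j = lbP n r k' Δ w' i j := by
    intro j hj
    refine lbP_apply_eq_of_bit_eq (hsame _ fun h => hj ?_)
    have : j.1 / 2 = q.1 := congrArg Fin.val h
    simp only [Finset.mem_insert, Finset.mem_singleton, Fin.ext_iff, a, b]
    omega
  have hsa : (-1 : ℝ) ^ (a.1 + 1) = -1 := by simp only [a]; simp [pow_succ, pow_mul]
  have hsb : (-1 : ℝ) ^ (b.1 + 1) = 1 := by simp only [b]; simp [pow_succ, pow_mul]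
  have ratio (x : ℝ) : x / (2 * k') / (1 / (2 * k')) = x := by field_simp
  rw [klFin_eq_sum_of_eqOn _ hrest, Finset.sum_pair hab,
    lbP_apply_of_bit_true hi ha hq, lbP_apply_of_bit_false hi ha hq',
    lbP_apply_of_bit_true hi hb hq, lbP_apply_of_bit_false hi hb hq', ratio, ratio, hsa, hsb,
    neg_one_mul, one_mul, ← sub_eq_add_neg]
  ring

lemma klFin_lbP_le_two_div {w w' : Fin k' → Bool} {q : Fin k'}
    (hanti : AntitoneOn Δ (Set.Icc 1 n)) (hnonneg : ∀ i ∈ Finset.Icc 1 n, 0 ≤ Δ i)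
    (hΔr : Δ (n - r + 1) ≤ √(2 * k' / r)) (hlt1 : √(2 * k' / r) < 1)
    (hin : i ∈ Finset.Icc 1 n) (hi : ¬ i ≤ n - r)
    (hq : w q = true) (hq' : w' q = false) (hsame : ∀ j : Fin k', j ≠ q → w j = w' j) :
    klFin (lbP n r k' Δ w i) (lbP n r k' Δ w' i) ≤ 2 / r := by
  rw [Finset.mem_Icc] at hin
  have hk : (k' : ℝ) ≠ 0 := by have := q.pos; positivity
  set δ := Δ (n - r + 1) - Δ i
  have hδ₀ : 0 ≤ δ := sub_nonneg.2 <| hanti ⟨by omega, by omega⟩ hin (by omega)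
  have hδ_le : δ ≤ √(2 * k' / r) := by linarith [hnonneg i (Finset.mem_Icc.2 hin)]
  have hδ_sq : δ ^ 2 ≤ 2 * k' / r := (Real.le_sqrt hδ₀ (by positivity)).1 hδ_le
  rw [klFin_lbP_eq_of_flip hi hq hq' hsame]
  calc _ ≤ 2 * δ ^ 2 / (2 * k') := by
        gcongr
        exact mul_log_one_sub_add_mul_log_one_add_le (by linarith) (by linarith)
    _ ≤ 2 * (2 * k' / r) / (2 * k') := by gcongr
    _ = 2 / r := by field_simp

end lbP

theorem stmt10_general (n r k' : ℕ)
    (Δ : ℕ → ℝ)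
    (hnonneg : ∀ i ∈ Finset.Icc 1 n, 0 ≤ Δ i)
    (hmono : ∀ i ∈ Finset.Icc 1 (n - 1), Δ (i + 1) ≤ Δ i)
    (hΔr : Δ (n - r + 1) ≤ Real.sqrt ((2 * (k' : ℝ)) / r))
    (hlt1 : Real.sqrt ((2 * (k' : ℝ)) / r) < 1)
    (w w' : Fin k' → Bool) (q : Fin k')
    (hq : w q = true) (hq' : w' q = false)
    (hsame : ∀ j : Fin k', j ≠ q → w j = w' j) :
    ∑ i ∈ Finset.Icc 1 n, klFin (lbP n r k' Δ w i) (lbP n r k' Δ w' i) ≤ 2 := by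
  set s := {i ∈ Finset.Icc 1 n | ¬ i ≤ n - r}
  have hs : #s ≤ r := by
    calc #s ≤ #(Finset.Ioc (n - r) n) := Finset.card_le_card fun i hi => by
            simp only [s, Finset.mem_filter, Finset.mem_Icc, Finset.mem_Ioc] at hi ⊢
            omega
      _ ≤ r := by rw [Nat.card_Ioc]; omega
  calc ∑ i ∈ Finset.Icc 1 n, klFin (lbP n r k' Δ w i) (lbP n r k' Δ w' i)
      = ∑ i ∈ s, klFin (lbP n r k' Δ w i) (lbP n r k' Δ w' i) := by
        refine (Finset.sum_filter_of_ne fun i _ h => ?_).symm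
        contrapose! h
        rw [lbP_eq_of_le w w' h, klFin_self]
    _ ≤ #s • (2 / r : ℝ) := Finset.sum_le_card_nsmul _ _ _ fun i hi => by
        rw [Finset.mem_filter] at hi
        exact klFin_lbP_le_two_div (antitoneOn_Icc_of_succ_le hmono) hnonneg hΔr hlt1 hi.1 hi.2
          hq hq' hsame
    _ ≤ 2 := by
        rw [nsmul_eq_mul]
        rcases Nat.eq_zero_or_pos r with rfl | hr
        · simp
        · calc (#s : ℝ) * (2 / r) ≤ r * (2 / r) := by gcongr
            _ = 2 := by field_simp

/-- Proposition 4.8. If `w, w′ ∈ {0,1}^{k/2}` differ exactly in the bit `q`,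
with `w_q = 1` and `w′_q = 0`, then the KL divergence between the product distributions
`S_w` and `S_{w′}` (which factorizes as the sum of the componentwise KL divergences)
is at most `2`. -/
theorem stmt10 (n r k' : ℕ) (hn : 0 < n) (hk' : 0 < k') (hr1 : 1 ≤ r) (hrn : r ≤ n)
    (Δ : ℕ → ℝ)
    (hnonneg : ∀ i ∈ Finset.Icc 1 n, 0 ≤ Δ i)
    (hmono : ∀ i ∈ Finset.Icc 1 (n - 1), Δ (i + 1) ≤ Δ i)
    (hΔn : Δ n = 0)
    (hΔr : Δ (n - r + 1) ≤ Real.sqrt ((2 * (k' : ℝ)) / r))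
    (hlt1 : Real.sqrt ((2 * (k' : ℝ)) / r) < 1)
    (w w' : Fin k' → Bool) (q : Fin k')
    (hq : w q = true) (hq' : w' q = false)
    (hsame : ∀ j : Fin k', j ≠ q → w j = w' j) :
    ∑ i ∈ Finset.Icc 1 n, klFin (lbP n r k' Δ w i) (lbP n r k' Δ w' i) ≤ 2 :=
  stmt10_general n r k' Δ hnonneg hmono hΔr hlt1 w w' q hq hq' hsame
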